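/- arXiv:1104.4765 — 4 statements merged into one kernel-verified Lean document; each statement's English description precedes it below -/
import Mathlib

section
/- Let H be a complex Hilbert space with inner product ⟪·,·⟫ conjugate-linear in the first argument. Let D be a (not necessarily dense) linear subspace of H and A : D → H a linear map. Let B be a symmetric linear operator defined on a subspace dom B of H extending A (that is, D ⊆ dom B, B agrees with A on D, and ⟪B u, φ⟫ = ⟪u, B φ⟫ for all u, φ ∈ dom B). Let z, w ∈ ℂ and suppose R : H → H is a bounded linear operator such that for every ξ ∈ H one has R ξ ∈ dom B and B (R ξ) - z • (R ξ) = ξ. If η ∈ H satisfies ⟪η, A φ⟫ = conj(w) * ⟪η, φ⟫ for all φ ∈ D, then the vector η' := η + (z - w) • (R η) satisfies ⟪η', A φ⟫ = conj(z) * ⟪η', φ⟫ for all φ ∈ D. -/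
open scoped InnerProductSpace ComplexConjugate

section SymmetricExtension

variable {𝕜 H : Type*} [RCLike 𝕜] [SeminormedAddCommGroup H] [InnerProductSpace 𝕜 H]
  {D domB : Submodule 𝕜 H} {A : D →ₗ[𝕜] H} {B : domB →ₗ[𝕜] H}

theorem inner_apply_eq_inner_extension_apply (hDsub : D ≤ domB)
    (hext : ∀ φ : D, B ⟨(φ : H), hDsub φ.2⟩ = A φ)
    (hsymm : ∀ u φ : domB, ⟪B u, (φ : H)⟫_𝕜 = ⟪(u : H), B φ⟫_𝕜) (u : domB) (φ : D) :
    ⟪(u : H), A φ⟫_𝕜 = ⟪B u, (φ : H)⟫_𝕜 := by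
  rw [← hext φ, ← hsymm u ⟨φ, hDsub φ.2⟩]

theorem inner_apply_of_extension_apply_eq (hDsub : D ≤ domB)
    (hext : ∀ φ : D, B ⟨(φ : H), hDsub φ.2⟩ = A φ)
    (hsymm : ∀ u φ : domB, ⟪B u, (φ : H)⟫_𝕜 = ⟪(u : H), B φ⟫_𝕜)
    {z : 𝕜} {η : H} {u : domB} (hu : B u = η + z • (u : H)) (φ : D) :
    ⟪(u : H), A φ⟫_𝕜 = ⟪η, (φ : H)⟫_𝕜 + conj z * ⟪(u : H), (φ : H)⟫_𝕜 := by
  rw [inner_apply_eq_inner_extension_apply hDsub hext hsymm, hu, inner_add_left,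
    inner_smul_left]

end SymmetricExtension

theorem stmt3_general {H : Type*} [NormedAddCommGroup H] [InnerProductSpace ℂ H]
    (D : Submodule ℂ H) (A : D →ₗ[ℂ] H)
    (domB : Submodule ℂ H) (B : domB →ₗ[ℂ] H)
    (hDsub : D ≤ domB)
    (hext : ∀ φ : D, B ⟨(φ : H), hDsub φ.2⟩ = A φ)
    (hsymm : ∀ u φ : domB, ⟪B u, (φ : H)⟫_ℂ = ⟪(u : H), B φ⟫_ℂ)
    (z w : ℂ) (R : H →L[ℂ] H)
    (hmem : ∀ ξ : H, R ξ ∈ domB)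
    (hres : ∀ ξ : H, B ⟨R ξ, hmem ξ⟩ - z • (R ξ) = ξ)
    (η : H) (hη : ∀ φ : D, ⟪η, A φ⟫_ℂ = conj w * ⟪η, (φ : H)⟫_ℂ) :
    ∀ φ : D, ⟪η + (z - w) • (R η), A φ⟫_ℂ = conj z * ⟪η + (z - w) • (R η), (φ : H)⟫_ℂ := by
  intro φ
  have hRη : ⟪R η, A φ⟫_ℂ = ⟪η, (φ : H)⟫_ℂ + conj z * ⟪R η, (φ : H)⟫_ℂ :=
    inner_apply_of_extension_apply_eq hDsub hext hsymm (u := ⟨R η, hmem η⟩)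
      (eq_add_of_sub_eq (hres η)) φ
  rw [inner_add_left, inner_add_left, inner_smul_left, inner_smul_left, hη, hRη, map_sub]
  ring

/-- The generalized Cayley transform `I + (z - w) R` of the resolvent `R` of a
symmetric extension `B` of `A` maps `Ker(A* - wI)` into `Ker(A* - zI)`, where
membership of `η` in `Ker(A* - wI)` means `⟪η, Aφ⟫ = conj w * ⟪η, φ⟫` for all
`φ` in the domain `D` of `A`. -/
theorem stmt3 {H : Type*} [NormedAddCommGroup H] [InnerProductSpace ℂ H] [CompleteSpace H]
    (D : Submodule ℂ H) (A : D →ₗ[ℂ] H)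
    (domB : Submodule ℂ H) (B : domB →ₗ[ℂ] H)
    (hDsub : D ≤ domB)
    (hext : ∀ φ : D, B ⟨(φ : H), hDsub φ.2⟩ = A φ)
    (hsymm : ∀ u φ : domB, ⟪B u, (φ : H)⟫_ℂ = ⟪(u : H), B φ⟫_ℂ)
    (z w : ℂ) (R : H →L[ℂ] H)
    (hmem : ∀ ξ : H, R ξ ∈ domB)
    (hres : ∀ ξ : H, B ⟨R ξ, hmem ξ⟩ - z • (R ξ) = ξ)
    (η : H) (hη : ∀ φ : D, ⟪η, A φ⟫_ℂ = conj w * ⟪η, (φ : H)⟫_ℂ) :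
    ∀ φ : D, ⟪η + (z - w) • (R η), A φ⟫_ℂ = conj z * ⟪η + (z - w) • (R η), (φ : H)⟫_ℂ :=
  stmt3_general D A domB B hDsub hext hsymm z w R hmem hres η hη
end

section
/- Let H be a complex Hilbert space with inner product ⟪·,·⟫ conjugate-linear in the first argument. Let R be a pseudo-resolvent on the nonreal points of ℂ (i.e., R z : H → H bounded with R z - R w = (z - w) • (R z ∘ R w) for all nonreal z, w) such that the Hilbert adjoint of R z equals R (conj z) for every nonreal z. Fix a nonreal w₀ and ψ₀ ∈ H and set ψ(z) := ψ₀ + (z - w₀) • (R z ψ₀) for nonreal z. Then for all nonreal z and v one has ⟪ψ(conj z), ψ(conj v)⟫ = ⟪ψ(v), ψ(z)⟫. -/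
/-!
Write `T_a(z) = 1 + (z - a) R z`, so that `ψ(z) = T_{w₀}(z) ψ₀`. The adjoint hypothesis gives
`T_{w₀}(z̄)† = T_{w̄₀}(z)`, so the two sides are the matrix elements at `ψ₀` of
`T_{w̄₀}(z) T_{w₀}(v̄)` and `T_{w̄₀}(v̄) T_{w₀}(z)`. These operators are equal for every
pseudo-resolvent: its values commute, and the difference of `T_b(z) T_a(u)` and `T_b(u) T_a(z)`
is `(a - b) (R z - R u - (z - u) R z R u)`, which vanishes by the resolvent identity.
-/

open scoped InnerProductSpace ComplexConjugate

section PseudoResolvent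

variable {𝕜 A : Type*} [Field 𝕜] [Ring A] [Algebra 𝕜 A]

def IsPseudoResolvent (S : Set 𝕜) (R : 𝕜 → A) : Prop :=
  ∀ z ∈ S, ∀ w ∈ S, R z - R w = (z - w) • (R z * R w)

def defectOp (R : 𝕜 → A) (a z : 𝕜) : A := 1 + (z - a) • R z

namespace IsPseudoResolvent

variable {S : Set 𝕜} {R : 𝕜 → A}

theorem commute (hR : IsPseudoResolvent S R) {z w : 𝕜} (hz : z ∈ S) (hw : w ∈ S) :
    Commute (R z) (R w) := by
  rcases eq_or_ne z w with rfl | hzw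
  · exact Commute.refl _
  · refine smul_right_injective A (sub_ne_zero.2 hzw) ?_
    calc (z - w) • (R z * R w) = -(R w - R z) := by rw [← hR z hz w hw, neg_sub]
      _ = (z - w) • (R w * R z) := by rw [hR w hw z hz, ← neg_smul, neg_sub]

theorem defectOp_mul_defectOp (hR : IsPseudoResolvent S R) {z u : 𝕜} (hz : z ∈ S) (hu : u ∈ S)
    (a b : 𝕜) : defectOp R b z * defectOp R a u = defectOp R b u * defectOp R a z := by
  have hres := hR z hz u hu
  have hcomm : R u * R z = R z * R u := (hR.commute hz hu).eq.symm
  simp only [defectOp, add_mul, mul_add, one_mul, mul_one, smul_mul_smul_comm, hcomm]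
  linear_combination (norm := module) (a - b) • hres

end IsPseudoResolvent

end PseudoResolvent

theorem adjoint_defectOp {H : Type*} [NormedAddCommGroup H] [InnerProductSpace ℂ H]
    [CompleteSpace H] {R : ℂ → H →L[ℂ] H} {z : ℂ}
    (h : ContinuousLinearMap.adjoint (R z) = R (conj z)) (a : ℂ) :
    ContinuousLinearMap.adjoint (defectOp R a z) = defectOp R (conj a) (conj z) := by
  simp only [defectOp, ← ContinuousLinearMap.star_eq_adjoint] at h ⊢
  rw [star_add, star_one, star_smul, h, star_sub]
  rfl

theorem stmt5_general {H : Type*} [NormedAddCommGroup H] [InnerProductSpace ℂ H] [CompleteSpace H]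
    (R : ℂ → H →L[ℂ] H)
    (hres : ∀ z w : ℂ, z.im ≠ 0 → w.im ≠ 0 → R z - R w = (z - w) • (R z ∘L R w))
    (hadj : ∀ z : ℂ, z.im ≠ 0 → ContinuousLinearMap.adjoint (R z) = R (conj z))
    (w₀ : ℂ) (ψ₀ : H)
    (ψ : ℂ → H) (hψ : ∀ z : ℂ, z.im ≠ 0 → ψ z = ψ₀ + (z - w₀) • (R z ψ₀)) :
    ∀ z v : ℂ, z.im ≠ 0 → v.im ≠ 0 →
      ⟪ψ (conj z), ψ (conj v)⟫_ℂ = ⟪ψ v, ψ z⟫_ℂ := by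
  intro z v hz hv
  have hR : IsPseudoResolvent {z : ℂ | z.im ≠ 0} R := fun z hz w hw => hres z w hz hw
  have hconj : ∀ {z : ℂ}, z.im ≠ 0 → (conj z).im ≠ 0 := by simp
  have hψ' : ∀ z : ℂ, z.im ≠ 0 → ψ z = defectOp R w₀ z ψ₀ := hψ
  have hT : ∀ {z : ℂ}, z.im ≠ 0 → ∀ x y : H,
      ⟪defectOp R w₀ (conj z) x, y⟫_ℂ = ⟪x, defectOp R (conj w₀) z y⟫_ℂ := by
    intro z hz x y
    rw [← ContinuousLinearMap.adjoint_inner_right, adjoint_defectOp (hadj _ (hconj hz)),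
      Complex.conj_conj]
  calc ⟪ψ (conj z), ψ (conj v)⟫_ℂ
      = ⟪ψ₀, (defectOp R (conj w₀) z * defectOp R w₀ (conj v)) ψ₀⟫_ℂ := by
        rw [hψ' _ (hconj hz), hψ' _ (hconj hv), hT hz]; rfl
    _ = ⟪ψ₀, (defectOp R (conj w₀) (conj v) * defectOp R w₀ z) ψ₀⟫_ℂ := by
        rw [hR.defectOp_mul_defectOp hz (hconj hv)]
    _ = ⟪ψ v, ψ z⟫_ℂ := by
        rw [hψ' _ hv, hψ' _ hz, ← Complex.conj_conj v, hT (hconj hv), Complex.conj_conj]; rfl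

/-- For a pseudo-resolvent `R` with `(R z)† = R (conj z)` and the defect family
`ψ(z) = ψ₀ + (z - w₀) • R z ψ₀`, one has `⟪ψ(conj z), ψ(conj v)⟫ = ⟪ψ(v), ψ(z)⟫`
for all nonreal `z, v`. -/
theorem stmt5 {H : Type*} [NormedAddCommGroup H] [InnerProductSpace ℂ H] [CompleteSpace H]
    (R : ℂ → H →L[ℂ] H)
    (hres : ∀ z w : ℂ, z.im ≠ 0 → w.im ≠ 0 → R z - R w = (z - w) • (R z ∘L R w))
    (hadj : ∀ z : ℂ, z.im ≠ 0 → ContinuousLinearMap.adjoint (R z) = R (conj z))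
    (w₀ : ℂ) (hw₀ : w₀.im ≠ 0) (ψ₀ : H)
    (ψ : ℂ → H) (hψ : ∀ z : ℂ, z.im ≠ 0 → ψ z = ψ₀ + (z - w₀) • (R z ψ₀)) :
    ∀ z v : ℂ, z.im ≠ 0 → v.im ≠ 0 →
      ⟪ψ (conj z), ψ (conj v)⟫_ℂ = ⟪ψ v, ψ z⟫_ℂ :=
  stmt5_general R hres hadj w₀ ψ₀ ψ hψ
end

section
/- Let H be a complex Hilbert space with inner product ⟪·,·⟫ conjugate-linear in the first argument. Let S be a subset of H and f : H → H a map such that ⟪f x, f y⟫ = ⟪y, x⟫ for all x, y ∈ S, and suppose the topological closure of the ℂ-linear span of S is all of H. Then there exists a unique map J : H → H that is additive, conjugate-homogeneous (J (c • x) = conj(c) • (J x) for all c ∈ ℂ, x ∈ H), norm-preserving (‖J x‖ = ‖x‖ for all x ∈ H), and satisfies J x = f x for every x ∈ S; moreover this J satisfies ⟪J x, J y⟫ = ⟪y, x⟫ for all x, y ∈ H. -/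
open scoped InnerProductSpace ComplexConjugate

/-!
On finite linear combinations of the `x ∈ S`, set `J (∑ cₓ • x) = ∑ conj cₓ • f x`. The hypothesis
`⟪f x, f y⟫ = ⟪y, x⟫` says that both sides have conjugate Gram matrices, so `‖J u‖ = ‖u‖` for every
combination `u`; in particular `J` is well defined. Being isometric, it extends by continuity to the
closure of the span, which is `H`, and `⟪J x, J y⟫ = ⟪y, x⟫` passes to the limit. Uniqueness holds
because two continuous conjugate-linear maps agreeing on a total set agree everywhere.
-/

open Set Finsupp

namespace Finsupp

variable {ι 𝕜 F : Type*} [RCLike 𝕜] [AddCommGroup F] [Module 𝕜 F]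

noncomputable def conjLinearCombination (w : ι → F) : (ι →₀ 𝕜) →ₗ⋆[𝕜] F :=
  linearCombination 𝕜 w ∘ₛₗ mapRange.linearMap (starLinearEquiv 𝕜 : 𝕜 ≃ₗ⋆[𝕜] 𝕜).toLinearMap

theorem conjLinearCombination_apply (w : ι → F) (l : ι →₀ 𝕜) :
    conjLinearCombination w l = l.sum fun i c => conj c • w i := by
  simp [conjLinearCombination, linearCombination_apply, sum_mapRange_index]

end Finsupp

section ConjLinearIsometry

variable {ι 𝕜 E F : Type*} [RCLike 𝕜] [NormedAddCommGroup E] [InnerProductSpace 𝕜 E]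
  [NormedAddCommGroup F] [InnerProductSpace 𝕜 F]

theorem inner_conjLinearCombination {v : ι → E} {w : ι → F}
    (hvw : ∀ i j, ⟪w i, w j⟫_𝕜 = ⟪v j, v i⟫_𝕜) (l l' : ι →₀ 𝕜) :
    ⟪conjLinearCombination w l, conjLinearCombination w l'⟫_𝕜 =
      ⟪linearCombination 𝕜 v l', linearCombination 𝕜 v l⟫_𝕜 := by
  simp only [conjLinearCombination_apply, linearCombination_apply, Finsupp.sum, sum_inner,
    inner_sum, inner_smul_left, inner_smul_right, RCLike.conj_conj, hvw, Finset.mul_sum]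
  rw [Finset.sum_comm]
  refine Finset.sum_congr rfl fun i _ => Finset.sum_congr rfl fun j _ => ?_
  ring

theorem norm_eq_of_inner_self_eq {x : E} {y : F} (h : ⟪x, x⟫_𝕜 = ⟪y, y⟫_𝕜) : ‖x‖ = ‖y‖ := by
  rw [norm_eq_sqrt_re_inner (𝕜 := 𝕜), norm_eq_sqrt_re_inner (𝕜 := 𝕜), h]

theorem exists_conjLinearIsometry_extension [CompleteSpace F] {v : ι → E} {w : ι → F}
    (hvw : ∀ i j, ⟪w i, w j⟫_𝕜 = ⟪v j, v i⟫_𝕜) (hv : Dense (Submodule.span 𝕜 (range v) : Set E)) :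
    ∃ J : E →ₗᵢ⋆[𝕜] F, (∀ i, J (v i) = w i) ∧ ∀ x y, ⟪J x, J y⟫_𝕜 = ⟪y, x⟫_𝕜 := by
  set T := linearCombination 𝕜 v
  set A : (ι →₀ 𝕜) →ₗ⋆[𝕜] F := conjLinearCombination w
  have hT : DenseRange T := by
    rwa [DenseRange, ← LinearMap.coe_range, range_linearCombination]
  have hA : ∃ C, ∀ l, ‖A l‖ ≤ C * ‖T l‖ :=
    ⟨1, fun l => by rw [one_mul, norm_eq_of_inner_self_eq (inner_conjLinearCombination hvw l l)]⟩
  set J := A.extendOfNorm T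
  have hJT : ∀ l, J (T l) = A l := LinearMap.extendOfNorm_eq hT hA
  have hJ : ∀ x y, ⟪J x, J y⟫_𝕜 = ⟪y, x⟫_𝕜 := by
    refine hT.induction_on₂ (isClosed_eq (by fun_prop) (by fun_prop)) fun l l' => ?_
    rw [hJT, hJT, inner_conjLinearCombination hvw]
  refine ⟨⟨J.toLinearMap, fun x => norm_eq_of_inner_self_eq (hJ x x)⟩, fun i => ?_, hJ⟩
  simpa [T, A, conjLinearCombination_apply] using hJT (single i 1)

theorem LinearIsometry.ext_on {σ : 𝕜 →+* 𝕜} [RingHomIsometric σ] {s : Set E}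
    (hs : Dense (Submodule.span 𝕜 s : Set E)) {f g : E →ₛₗᵢ[σ] F} (h : EqOn f g s) : f = g :=
  toContinuousLinearMap_injective (ContinuousLinearMap.ext_on hs h)

end ConjLinearIsometry

/-- Extension principle for antilinear isometries: a map `f` defined on a total
subset `S` of `H` satisfying `⟪f x, f y⟫ = ⟪y, x⟫` on `S` extends uniquely to an
additive, conjugate-homogeneous, norm-preserving map `J : H → H`, and this
extension satisfies `⟪J x, J y⟫ = ⟪y, x⟫` on all of `H`. -/
theorem stmt7 {H : Type*} [NormedAddCommGroup H] [InnerProductSpace ℂ H] [CompleteSpace H]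
    (S : Set H) (f : H → H)
    (hf : ∀ x ∈ S, ∀ y ∈ S, ⟪f x, f y⟫_ℂ = ⟪y, x⟫_ℂ)
    (htotal : (Submodule.span ℂ S).topologicalClosure = ⊤) :
    ∃ J : H → H,
      ((∀ x y : H, J (x + y) = J x + J y) ∧
        (∀ (c : ℂ) (x : H), J (c • x) = conj c • J x) ∧
        (∀ x : H, ‖J x‖ = ‖x‖) ∧
        (∀ x ∈ S, J x = f x)) ∧
      (∀ x y : H, ⟪J x, J y⟫_ℂ = ⟪y, x⟫_ℂ) ∧
      (∀ J' : H → H,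
        ((∀ x y : H, J' (x + y) = J' x + J' y) ∧
          (∀ (c : ℂ) (x : H), J' (c • x) = conj c • J' x) ∧
          (∀ x : H, ‖J' x‖ = ‖x‖) ∧
          (∀ x ∈ S, J' x = f x)) → J' = J) := by
  have hS : Dense (Submodule.span ℂ S : Set H) :=
    Submodule.dense_iff_topologicalClosure_eq_top.mpr htotal
  obtain ⟨J, hJS, hJ⟩ := exists_conjLinearIsometry_extension (v := ((↑) : S → H))
    (w := f ∘ (↑)) (fun x y => hf _ x.2 _ y.2) (by rwa [Subtype.range_coe])
  refine ⟨J, ⟨J.map_add, J.map_smulₛₗ, J.norm_map, fun x hx => hJS ⟨x, hx⟩⟩, hJ, ?_⟩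
  rintro J' ⟨hadd, hsmul, hnorm, hJ'S⟩
  let K : H →ₗᵢ⋆[ℂ] H := ⟨⟨⟨J', hadd⟩, hsmul⟩, hnorm⟩
  have hKJ : K = J := LinearIsometry.ext_on hS fun x hx => (hJ'S x hx).trans (hJS ⟨x, hx⟩).symm
  exact congrArg DFunLike.coe hKJ
end

section
/- Let H be a complex Hilbert space with inner product ⟪·,·⟫ conjugate-linear in the first argument. Let R be a pseudo-resolvent on the nonreal points of ℂ (R z : H → H bounded, R z - R w = (z - w) • (R z ∘ R w) for all nonreal z, w) such that the Hilbert adjoint of R z equals R (conj z) for every nonreal z. Fix a nonreal w₀ and ψ₀ ∈ H and set ψ(z) := ψ₀ + (z - w₀) • (R z ψ₀) for nonreal z. Let w be nonreal and let φ ∈ H satisfy ⟪ψ(conj w), φ⟫ = 0. Define η := φ + (w - conj w) • (R w φ). Then: (a) ‖η‖ = ‖φ‖, and (b) for every nonreal z with z ≠ w, ⟪ψ(conj z), η⟫ = ((z - conj w) / (z - w)) * ⟪ψ(conj z), φ⟫. -/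
/-!
`η = (1 + (w - conj w) R w) φ` is the Cayley transform of the resolvent, an isometry by the
resolvent identity at `(conj w, w)` together with `(R w)* = R (conj w)`. The resolvent identity
also gives `ψ (conj w) - ψ (conj z) = (conj w - conj z) • R (conj w) (ψ (conj z))`; pairing this
with `φ ⟂ ψ (conj w)` yields `⟪ψ (conj z), R w φ⟫ = ⟪ψ (conj z), φ⟫ / (z - w)`.
-/

open scoped InnerProductSpace ComplexConjugate

section

variable {H : Type*} [NormedAddCommGroup H] [InnerProductSpace ℂ H]

lemma defect_sub_defect (R : ℂ → H →L[ℂ] H) {a b : ℂ}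
    (hres : R a - R b = (a - b) • (R a ∘L R b)) (w₀ : ℂ) (ψ₀ : H) :
    (ψ₀ + (a - w₀) • R a ψ₀) - (ψ₀ + (b - w₀) • R b ψ₀)
      = (a - b) • R a (ψ₀ + (b - w₀) • R b ψ₀) := by
  have hψ₀ : R a ψ₀ - R b ψ₀ = (a - b) • R a (R b ψ₀) := by
    simpa using congrArg (fun T : H →L[ℂ] H => T ψ₀) hres
  calc (ψ₀ + (a - w₀) • R a ψ₀) - (ψ₀ + (b - w₀) • R b ψ₀)
      = (a - b) • R a ψ₀ + (b - w₀) • (R a ψ₀ - R b ψ₀) := by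
        rw [smul_sub, ← sub_add_sub_cancel a b w₀, add_smul]; abel
    _ = (a - b) • R a (ψ₀ + (b - w₀) • R b ψ₀) := by
        rw [hψ₀, map_add, map_smul, smul_add, smul_comm (b - w₀) (a - b)]

variable [CompleteSpace H]

lemma norm_add_smul_apply_eq_norm {A B : H →L[ℂ] H} {w : ℂ}
    (hres : B - A = (conj w - w) • (B ∘L A)) (hadj : ContinuousLinearMap.adjoint A = B)
    (φ : H) : ‖φ + (w - conj w) • A φ‖ = ‖φ‖ := by
  have hAφ : ⟪φ, B φ⟫_ℂ - ⟪φ, A φ⟫_ℂ = (conj w - w) * ⟪A φ, A φ⟫_ℂ := by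
    rw [← inner_sub_right, ← sub_apply, hres, ← hadj,
      smul_apply, inner_smul_right, ContinuousLinearMap.comp_apply,
      ContinuousLinearMap.adjoint_inner_right]
  have hAφ' : ⟪A φ, φ⟫_ℂ = ⟪φ, B φ⟫_ℂ := by
    rw [← hadj, ContinuousLinearMap.adjoint_inner_right]
  have hinner : ⟪φ + (w - conj w) • A φ, φ + (w - conj w) • A φ⟫_ℂ = ⟪φ, φ⟫_ℂ := by
    rw [inner_add_add_self, inner_smul_left, inner_smul_right, inner_smul_left,
      inner_smul_right, hAφ', map_sub, Complex.conj_conj]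
    linear_combination (conj w - w) * hAφ
  rw [inner_self_eq_norm_sq_to_K, inner_self_eq_norm_sq_to_K] at hinner
  exact (sq_eq_sq₀ (norm_nonneg _) (norm_nonneg _)).mp (by exact_mod_cast hinner)

lemma inner_add_smul_apply_eq_mul_inner (A : H →L[ℂ] H) {w z : ℂ} (hzw : z ≠ w) {u v φ : H}
    (huv : u - v = (conj w - conj z) • ContinuousLinearMap.adjoint A v) (hφ : ⟪u, φ⟫_ℂ = 0) :
    ⟪v, φ + (w - conj w) • A φ⟫_ℂ = ((z - conj w) / (z - w)) * ⟪v, φ⟫_ℂ := by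
  have hAφ : (w - z) * ⟪v, A φ⟫_ℂ = -⟪v, φ⟫_ℂ := by
    have := congrArg (fun x : H => ⟪x, φ⟫_ℂ) huv
    simp only [inner_sub_left, inner_smul_left, hφ, map_sub, Complex.conj_conj,
      ContinuousLinearMap.adjoint_inner_left] at this
    rw [← this]; ring
  have hzw' : z - w ≠ 0 := sub_ne_zero.mpr hzw
  rw [inner_add_right, inner_smul_right]
  field_simp
  linear_combination (conj w - w) * hAφ

end

theorem stmt11_general {H : Type*} [NormedAddCommGroup H] [InnerProductSpace ℂ H] [CompleteSpace H]
    (R : ℂ → H →L[ℂ] H)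
    (hres : ∀ z w : ℂ, z.im ≠ 0 → w.im ≠ 0 → R z - R w = (z - w) • (R z ∘L R w))
    (hadj : ∀ z : ℂ, z.im ≠ 0 → ContinuousLinearMap.adjoint (R z) = R (conj z))
    (w₀ : ℂ) (ψ₀ : H)
    (ψ : ℂ → H) (hψ : ∀ z : ℂ, z.im ≠ 0 → ψ z = ψ₀ + (z - w₀) • (R z ψ₀))
    (w : ℂ) (hw : w.im ≠ 0) (φ : H) (hφ : ⟪ψ (conj w), φ⟫_ℂ = 0)
    (η : H) (hη : η = φ + (w - conj w) • (R w φ)) :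
    ‖η‖ = ‖φ‖ ∧
    ∀ z : ℂ, z.im ≠ 0 → z ≠ w →
      ⟪ψ (conj z), η⟫_ℂ = ((z - conj w) / (z - w)) * ⟪ψ (conj z), φ⟫_ℂ := by
  have hw' : (conj w).im ≠ 0 := by simpa using hw
  subst hη
  refine ⟨norm_add_smul_apply_eq_norm (hres _ _ hw' hw) (hadj w hw) φ, fun z hz hzw => ?_⟩
  have hz' : (conj z).im ≠ 0 := by simpa using hz
  refine inner_add_smul_apply_eq_mul_inner (R w) hzw ?_ hφ
  rw [hadj w hw, hψ _ hw', hψ _ hz']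
  exact defect_sub_defect R (hres _ _ hw' hz') w₀ ψ₀

/-- Verification of de Branges axiom (A2) in the functional model: if
`⟪ψ(conj w), φ⟫ = 0` and `η = φ + (w - conj w) • R w φ`, then `‖η‖ = ‖φ‖` and
`⟪ψ(conj z), η⟫ = ((z - conj w)/(z - w)) * ⟪ψ(conj z), φ⟫` for nonreal `z ≠ w`. -/
theorem stmt11 {H : Type*} [NormedAddCommGroup H] [InnerProductSpace ℂ H] [CompleteSpace H]
    (R : ℂ → H →L[ℂ] H)
    (hres : ∀ z w : ℂ, z.im ≠ 0 → w.im ≠ 0 → R z - R w = (z - w) • (R z ∘L R w))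
    (hadj : ∀ z : ℂ, z.im ≠ 0 → ContinuousLinearMap.adjoint (R z) = R (conj z))
    (w₀ : ℂ) (hw₀ : w₀.im ≠ 0) (ψ₀ : H)
    (ψ : ℂ → H) (hψ : ∀ z : ℂ, z.im ≠ 0 → ψ z = ψ₀ + (z - w₀) • (R z ψ₀))
    (w : ℂ) (hw : w.im ≠ 0) (φ : H) (hφ : ⟪ψ (conj w), φ⟫_ℂ = 0)
    (η : H) (hη : η = φ + (w - conj w) • (R w φ)) :
    ‖η‖ = ‖φ‖ ∧
    ∀ z : ℂ, z.im ≠ 0 → z ≠ w →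
      ⟪ψ (conj z), η⟫_ℂ = ((z - conj w) / (z - w)) * ⟪ψ (conj z), φ⟫_ℂ :=
  stmt11_general R hres hadj w₀ ψ₀ ψ hψ w hw φ hφ η hη
end
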